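/- Let γ > 0, ω ∈ ℝ and β ∈ ℂ, and let A be the 3×3 complex matrix A = [[−2γ, −2·conj(β), −2β], [β, −γ − iω, 0], [conj(β), 0, −γ + iω]]. Then for every v ∈ ℂ³ and every t ≥ 0, ‖ exp(tA) v ‖² ≤ 2 e^{−2γt} ‖v‖², where exp denotes the matrix exponential and ‖·‖ the Euclidean norm on ℂ³. -/

import Mathlib

/-!
The weighted energy `E x = |x₀|² + 2|x₁|² + 2|x₂|²` is a Lyapunov function for `u' = A u`:
with these weights the `β`-couplings of `A` cancel in `Re ∑ wᵢ x̄ᵢ (A x)ᵢ`, so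
`E' = -4γ ‖u‖² ≤ -2γ E`, and Grönwall gives `E (e^{tA} v) ≤ e^{-2γt} E v`.
Since `‖x‖² ≤ E x ≤ 2 ‖x‖²`, this costs only the factor `2`.
-/

open Matrix
open scoped InnerProductSpace

theorem le_exp_mul_mul_of_hasDerivAt_le_mul {f f' : ℝ → ℝ} {c t : ℝ}
    (hf : ∀ s, HasDerivAt f (f' s) s) (hle : ∀ s, f' s ≤ c * f s) (ht : 0 ≤ t) :
    f t ≤ Real.exp (c * t) * f 0 := by
  have hg : ∀ s, HasDerivAt (fun s => Real.exp (-c * s) * f s)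
      (Real.exp (-c * s) * (f' s - c * f s)) s := by
    intro s
    refine ((((hasDerivAt_id s).const_mul (-c)).exp).fun_mul (hf s)).congr_deriv ?_
    simp only [id]
    ring
  have hanti : Antitone fun s => Real.exp (-c * s) * f s :=
    antitone_of_deriv_nonpos (fun s => (hg s).differentiableAt) fun s => by
      rw [(hg s).deriv]
      exact mul_nonpos_of_nonneg_of_nonpos (Real.exp_pos _).le (sub_nonpos.2 (hle s))
  have := hanti ht
  simp only [mul_zero, Real.exp_zero, one_mul] at this
  rwa [neg_mul, Real.exp_neg, inv_mul_le_iff₀ (Real.exp_pos _)] at this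

section

variable {n : Type*} [Fintype n]

attribute [local instance] Matrix.linftyOpNormedRing Matrix.linftyOpNormedAlgebra in
theorem Matrix.hasDerivAt_exp_smul_mulVec [DecidableEq n] (A : Matrix n n ℂ) (v : n → ℂ)
    (t : ℝ) :
    HasDerivAt (fun s : ℝ => NormedSpace.exp (s • A) *ᵥ v)
      (A *ᵥ (NormedSpace.exp (t • A) *ᵥ v)) t := by
  let evalAt : Matrix n n ℂ →L[ℝ] n → ℂ :=
    ((mulVecBilin ℝ ℝ).flip v).toContinuousLinearMap
  exact (evalAt.hasFDerivAt.comp_hasDerivAt t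
    (hasDerivAt_exp_smul_const' (𝕂 := ℝ) A t)).congr_deriv (mulVec_mulVec _ _ _).symm

noncomputable def weightedNormSq (w : n → ℝ) (x : n → ℂ) : ℝ := ∑ i, w i * ‖x i‖ ^ 2

theorem mul_sum_sq_norm_le_weightedNormSq {w : n → ℝ} {a : ℝ} (hw : ∀ i, a ≤ w i) (x : n → ℂ) :
    a * ∑ i, ‖x i‖ ^ 2 ≤ weightedNormSq w x := by
  rw [Finset.mul_sum]
  exact Finset.sum_le_sum fun i _ => mul_le_mul_of_nonneg_right (hw i) (by positivity)

theorem weightedNormSq_le_mul_sum_sq_norm {w : n → ℝ} {b : ℝ} (hw : ∀ i, w i ≤ b) (x : n → ℂ) :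
    weightedNormSq w x ≤ b * ∑ i, ‖x i‖ ^ 2 := by
  rw [Finset.mul_sum]
  exact Finset.sum_le_sum fun i _ => mul_le_mul_of_nonneg_right (hw i) (by positivity)

theorem HasDerivAt.weightedNormSq {u : ℝ → n → ℂ} {u' : n → ℂ} {t : ℝ} (w : n → ℝ)
    (hu : HasDerivAt u u' t) :
    HasDerivAt (fun s => weightedNormSq w (u s)) (2 * ∑ i, w i * ⟪u t i, u' i⟫_ℝ) t := by
  rw [Finset.mul_sum]
  exact HasDerivAt.fun_sum fun i _ =>
    ((hasDerivAt_pi.1 hu i).norm_sq.const_mul (w i)).congr_deriv (mul_left_comm _ _ _)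

theorem weightedNormSq_exp_smul_mulVec_le [DecidableEq n] (A : Matrix n n ℂ) (w : n → ℝ) (c : ℝ)
    (hA : ∀ x, 2 * ∑ i, w i * ⟪x i, (A *ᵥ x) i⟫_ℝ ≤ c * weightedNormSq w x)
    (v : n → ℂ) {t : ℝ} (ht : 0 ≤ t) :
    weightedNormSq w (NormedSpace.exp (t • A) *ᵥ v) ≤ Real.exp (c * t) * weightedNormSq w v := by
  simpa using le_exp_mul_mul_of_hasDerivAt_le_mul
    (fun s => (hasDerivAt_exp_smul_mulVec A v s).weightedNormSq w) (fun s => hA _) ht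

end

def atomicDriftWeight : Fin 3 → ℝ := ![1, 2, 2]

theorem one_le_atomicDriftWeight (i : Fin 3) : 1 ≤ atomicDriftWeight i := by
  fin_cases i <;> norm_num [atomicDriftWeight]

theorem atomicDriftWeight_le_two (i : Fin 3) : atomicDriftWeight i ≤ 2 := by
  fin_cases i <;> norm_num [atomicDriftWeight]

noncomputable def atomicDrift (γ ω : ℝ) (β : ℂ) : Matrix (Fin 3) (Fin 3) ℂ :=
  !![(-2 * γ : ℂ), -2 * (starRingEnd ℂ) β, -2 * β;
     β, -(γ : ℂ) - (ω : ℂ) * Complex.I, 0;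
     (starRingEnd ℂ) β, 0, -(γ : ℂ) + (ω : ℂ) * Complex.I]

theorem atomicDrift_dissipation (γ ω : ℝ) (β : ℂ) (x : Fin 3 → ℂ) :
    ∑ i, atomicDriftWeight i * ⟪x i, (atomicDrift γ ω β *ᵥ x) i⟫_ℝ =
      -(2 * γ) * ∑ i, ‖x i‖ ^ 2 := by
  simp only [atomicDriftWeight, atomicDrift, mulVec, dotProduct, Fin.sum_univ_three, of_apply,
    cons_val', cons_val_fin_one, cons_val_zero, cons_val_one, cons_val, Fin.isValue,
    Complex.inner, Complex.sq_norm, Complex.normSq_apply, Complex.mul_re, Complex.mul_im,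
    Complex.add_re, Complex.add_im, Complex.sub_re, Complex.sub_im, Complex.neg_re, Complex.neg_im,
    Complex.conj_re, Complex.conj_im, Complex.ofReal_re, Complex.ofReal_im, Complex.re_ofNat,
    Complex.im_ofNat, Complex.I_re, Complex.I_im, Complex.zero_re, Complex.zero_im]
  ring

theorem atomicDrift_dissipative {γ : ℝ} (hγ : 0 ≤ γ) (ω : ℝ) (β : ℂ) (x : Fin 3 → ℂ) :
    2 * ∑ i, atomicDriftWeight i * ⟪x i, (atomicDrift γ ω β *ᵥ x) i⟫_ℝ ≤
      -2 * γ * weightedNormSq atomicDriftWeight x := by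
  have hle : weightedNormSq atomicDriftWeight x ≤ 2 * ∑ i, ‖x i‖ ^ 2 :=
    weightedNormSq_le_mul_sum_sq_norm atomicDriftWeight_le_two x
  rw [atomicDrift_dissipation]
  nlinarith

theorem atomic_drift_matrix_exponential_contraction
    (γ ω : ℝ) (hγ : 0 < γ) (β : ℂ)
    (A : Matrix (Fin 3) (Fin 3) ℂ)
    (hA : A = !![(-2 * γ : ℂ), -2 * (starRingEnd ℂ) β, -2 * β;
                 β, -(γ : ℂ) - (ω : ℂ) * Complex.I, 0;
                 (starRingEnd ℂ) β, 0, -(γ : ℂ) + (ω : ℂ) * Complex.I]) :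
    ∀ (v : Fin 3 → ℂ) (t : ℝ), 0 ≤ t →
      ∑ i, ‖((NormedSpace.exp (t • A)).mulVec v) i‖ ^ 2 ≤
        2 * Real.exp (-2 * γ * t) * ∑ i, ‖v i‖ ^ 2 := by
  intro v t ht
  rw [show A = atomicDrift γ ω β from hA]
  calc ∑ i, ‖(NormedSpace.exp (t • atomicDrift γ ω β) *ᵥ v) i‖ ^ 2
      ≤ weightedNormSq atomicDriftWeight (NormedSpace.exp (t • atomicDrift γ ω β) *ᵥ v) := by
        simpa using mul_sum_sq_norm_le_weightedNormSq one_le_atomicDriftWeight _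
    _ ≤ Real.exp (-2 * γ * t) * weightedNormSq atomicDriftWeight v :=
        weightedNormSq_exp_smul_mulVec_le _ _ _ (atomicDrift_dissipative hγ.le ω β) v ht
    _ ≤ Real.exp (-2 * γ * t) * (2 * ∑ i, ‖v i‖ ^ 2) := by
        gcongr
        exact weightedNormSq_le_mul_sum_sq_norm atomicDriftWeight_le_two v
    _ = 2 * Real.exp (-2 * γ * t) * ∑ i, ‖v i‖ ^ 2 := by ring
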